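/- Let G₁ and G₂ be the blocks of an amalgam decomposition of G along amalgam separation (V₁,A₁,K,A₂,V₂), where G_i is obtained from G[V_i ∪ A_i ∪ K] by adding one new vertex r_i fully adjacent to A_i ∪ K. Then STAB(G) = { x_G : x ∈ ℝ^{V ∪ {r₁,r₂}}, x_{G₁} ∈ STAB(G₁), x_{G₂} ∈ STAB(G₂), x(K) + x_{r₁} + x_{r₂} ≥ 1 }. -/

import Mathlib

open Finset
open scoped Classical

variable {V : Type*} [Fintype V] [DecidableEq V]

/-- A stable (independent) set. -/
def IsStable {W : Type*} (G : SimpleGraph W) (S : Finset W) : Prop :=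
  ∀ a ∈ S, ∀ b ∈ S, ¬ G.Adj a b

/-- The stable set polytope. -/
noncomputable def stab {W : Type*} [Fintype W] (G : SimpleGraph W) : Set (W → ℝ) :=
  convexHull ℝ {x | ∃ S : Finset W, IsStable G S ∧
    x = fun w => if w ∈ S then (1 : ℝ) else 0}

/-- `x` restricted to `W₁` lies in the stable set polytope of `H[W₁]`. -/
noncomputable def MemStabOn {W : Type*} [Fintype W] [DecidableEq W]
    (H : SimpleGraph W) (W₁ : Finset W) (x : W → ℝ) : Prop :=
  (fun w : {w // w ∈ W₁} => x w.1) ∈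
    convexHull ℝ {z : {w // w ∈ W₁} → ℝ | ∃ S : Finset W, S ⊆ W₁ ∧ IsStable H S ∧
      z = fun w => if w.1 ∈ S then (1 : ℝ) else 0}

/-- `G` together with the two block vertices `r₁ = inr false`, `r₂ = inr true`,
`r_i` fully adjacent to `A_i ∪ K`; the blocks of the amalgam decomposition are the
induced subgraphs on `V_i ∪ A_i ∪ K ∪ {r_i}`. -/
noncomputable def blockGraph (G : SimpleGraph V) (A₁ K A₂ : Finset V) :
    SimpleGraph (V ⊕ Bool) :=
  SimpleGraph.fromRel (fun x y =>
    match x, y with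
    | Sum.inl a, Sum.inl b => G.Adj a b
    | Sum.inl a, Sum.inr b => (b = false ∧ a ∈ A₁ ∪ K) ∨ (b = true ∧ a ∈ A₂ ∪ K)
    | Sum.inr b, Sum.inl a => (b = false ∧ a ∈ A₁ ∪ K) ∨ (b = true ∧ a ∈ A₂ ∪ K)
    | Sum.inr _, Sum.inr _ => False)

/-!
Write the two block restrictions of `x` as convex combinations `∑ p S • 1_S` and `∑ q T • 1_T` of
stable sets of `G₁` and `G₂`. Each `S` contains at most one vertex of the clique `K ∪ {r₁}`, and
this vertex (or its absence) is distributed with masses `x_k` (`k ∈ K`), `x_{r₁}` and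
`1 - x(K) - x_{r₁}`; symmetrically for `T`. The inequality `x(K) + x_{r₁} + x_{r₂} ≥ 1` is exactly
what allows coupling the two label distributions so that `k` meets `k`, "none" on the first side
meets `r₂`, and `r₁` meets "none" or `r₂`. Lifting this coupling to the sets themselves, each
paired `S` and `T` glue to a stable set of `G` (`S` on `V₁ ∪ A₁ ∪ K`, `T` on `A₂ ∪ V₂`), and the
glued sets average to `x_G`. Conversely, a stable set of `G` lifts by adding every `rᵢ` without a
neighbour in it, and `A₁` being complete to `A₂` makes the inequality hold.
-/

theorem exists_weights_of_mem_convexHull_image {ι E : Type*} [Fintype ι] [AddCommGroup E]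
    [Module ℝ E] {F : ι → E} {A : Set ι} {x : E} (hx : x ∈ convexHull ℝ (F '' A)) :
    ∃ p : ι → ℝ, (∀ i, 0 ≤ p i) ∧ ∑ i, p i = 1 ∧ (∀ i, p i ≠ 0 → i ∈ A) ∧
      ∑ i, p i • F i = x := by
  obtain ⟨κ, _, w, z, hw0, hw1, hz, rfl⟩ := mem_convexHull_iff_exists_fintype.1 hx
  choose s hsA hsz using hz
  refine ⟨fun i => ∑ k with s k = i, w k, fun i => sum_nonneg fun k _ => hw0 k,
    by rw [Finset.sum_fiberwise univ s w, hw1], fun i hi => ?_, ?_⟩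
  · obtain ⟨k, hk, -⟩ := exists_ne_zero_of_sum_ne_zero hi
    exact (mem_filter.1 hk).2 ▸ hsA k
  · simp_rw [sum_smul]
    rw [← Finset.sum_fiberwise univ s (fun k => w k • z k)]
    exact sum_congr rfl fun i _ => sum_congr rfl fun k hk => by
      rw [← hsz, (mem_filter.1 hk).2]

theorem sum_smul_mem_convexHull {ι E : Type*} [Fintype ι] [AddCommGroup E] [Module ℝ E]
    {s : Set E} {w : ι → ℝ} {z : ι → E} (hw0 : ∀ i, 0 ≤ w i) (hw1 : ∑ i, w i = 1)
    (hz : ∀ i, w i ≠ 0 → z i ∈ s) : ∑ i, w i • z i ∈ convexHull ℝ s := by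
  rw [← sum_filter_of_ne (p := fun i => w i ≠ 0) fun i _ h => left_ne_zero_of_smul h]
  refine (convex_convexHull ℝ s).sum_mem (fun i _ => hw0 i) ?_ fun i hi =>
    subset_convexHull ℝ s (hz i (mem_filter.1 hi).2)
  rwa [sum_filter_ne_zero]

theorem sum_div_sum_fiber_mul {β δ : Type*} [Fintype β] [Fintype δ] [DecidableEq δ] {q : β → ℝ}
    (g : β → δ) {φ : δ → ℝ} (hφ : ∀ d, ∑ b with g b = d, q b = 0 → φ d = 0) :
    ∑ b, q b / (∑ b' with g b' = g b, q b') * φ (g b) = ∑ d, φ d := by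
  rw [← Finset.sum_fiberwise univ g]
  refine sum_congr rfl fun d _ => ?_
  calc ∑ b with g b = d, q b / (∑ b' with g b' = g b, q b') * φ (g b)
      = (∑ b with g b = d, q b) / (∑ b with g b = d, q b) * φ d := by
        rw [sum_div, sum_mul]
        exact sum_congr rfl fun b hb => by rw [(mem_filter.1 hb).2]
    _ = φ d := by rw [div_mul_comm, div_mul_cancel_of_imp (hφ d)]

/-- Gluing lemma: a coupling `π` of the pushforwards of `p` and `q` lifts to a coupling of `p`
and `q`, by spreading `π c d` over the fibres of `c` and `d` proportionally to `p` and `q`. -/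
theorem exists_coupling_of_coupling_map {α β γ δ : Type*} [Fintype α] [Fintype β] [Fintype γ]
    [Fintype δ] [DecidableEq γ] [DecidableEq δ] {p : α → ℝ} {q : β → ℝ} (f : α → γ) (g : β → δ)
    {π : γ → δ → ℝ}
    (hp : ∀ a, 0 ≤ p a) (hq : ∀ b, 0 ≤ q b) (hπ : ∀ c d, 0 ≤ π c d)
    (hπp : ∀ c, ∑ d, π c d = ∑ a with f a = c, p a)
    (hπq : ∀ d, ∑ c, π c d = ∑ b with g b = d, q b) :
    ∃ σ : α → β → ℝ, (∀ a b, 0 ≤ σ a b) ∧ (∀ a, ∑ b, σ a b = p a) ∧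
      (∀ b, ∑ a, σ a b = q b) ∧ ∀ a b, σ a b ≠ 0 → p a ≠ 0 ∧ q b ≠ 0 ∧ π (f a) (g b) ≠ 0 := by
  set P : γ → ℝ := fun c => ∑ a with f a = c, p a
  set Q : δ → ℝ := fun d => ∑ b with g b = d, q b
  have hπP : ∀ c d, P c = 0 → π c d = 0 := fun c d hc =>
    le_antisymm (((single_le_sum (fun d _ => hπ c d) (mem_univ d)).trans_eq (hπp c)).trans_eq hc)
      (hπ c d)
  have hπQ : ∀ c d, Q d = 0 → π c d = 0 := fun c d hd =>
    le_antisymm (((single_le_sum (fun c _ => hπ c d) (mem_univ c)).trans_eq (hπq d)).trans_eq hd)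
      (hπ c d)
  refine ⟨fun a b => p a / P (f a) * (q b / Q (g b) * π (f a) (g b)), fun a b => ?_,
    fun a => ?_, fun b => ?_, fun a b h => ?_⟩
  · have hP : 0 ≤ P (f a) := sum_nonneg fun a _ => hp a
    have hQ : 0 ≤ Q (g b) := sum_nonneg fun b _ => hq b
    exact mul_nonneg (div_nonneg (hp a) hP) (mul_nonneg (div_nonneg (hq b) hQ) (hπ _ _))
  · rw [← mul_sum, sum_div_sum_fiber_mul g (hπQ (f a)), hπp]
    exact div_mul_cancel_of_imp fun h => le_antisymm
      (h ▸ single_le_sum (fun a _ => hp a) (by simp)) (hp a)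
  · simp_rw [mul_left_comm (p _ / _)]
    rw [← mul_sum, sum_div_sum_fiber_mul f (fun c => hπP c (g b)), hπq]
    exact div_mul_cancel_of_imp fun h => le_antisymm
      (h ▸ single_le_sum (fun b _ => hq b) (by simp)) (hq b)
  · simp only [ne_eq, mul_eq_zero, div_eq_zero_iff, not_or] at h
    exact ⟨h.1.1, h.2.1.1, h.2.2⟩

section StableSets

variable {W : Type*} [Fintype W] {H : SimpleGraph W}

theorem exists_weights_of_memStabOn [DecidableEq W] {U : Finset W} {x : W → ℝ}
    (h : MemStabOn H U x) :
    ∃ p : Finset W → ℝ, (∀ S, 0 ≤ p S) ∧ ∑ S, p S = 1 ∧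
      (∀ S, p S ≠ 0 → S ⊆ U ∧ IsStable H S) ∧ ∀ w ∈ U, x w = ∑ S with w ∈ S, p S := by
  have hgen : {z : {w // w ∈ U} → ℝ | ∃ S : Finset W, S ⊆ U ∧ IsStable H S ∧
      z = fun w => if w.1 ∈ S then (1 : ℝ) else 0} =
      (fun S w => if w.1 ∈ S then (1 : ℝ) else 0) '' {S | S ⊆ U ∧ IsStable H S} := by
    ext z
    simp [eq_comm, and_assoc]
  rw [MemStabOn, hgen] at h
  obtain ⟨p, hp0, hp1, hpA, hpx⟩ := exists_weights_of_mem_convexHull_image h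
  refine ⟨p, hp0, hp1, hpA, fun w hw => ?_⟩
  have := congrFun hpx ⟨w, hw⟩
  simp only [Finset.sum_apply, Pi.smul_apply, smul_eq_mul, mul_ite, mul_one, mul_zero] at this
  rw [← this, sum_filter]

theorem memStabOn_indicator [DecidableEq W] (U : Finset W) {S : Finset W} (hS : IsStable H S) :
    MemStabOn H U (fun w => if w ∈ S then 1 else 0) :=
  subset_convexHull ℝ _ ⟨S ∩ U, inter_subset_right,
    fun a ha b hb => hS a (mem_inter.1 ha).1 b (mem_inter.1 hb).1, by ext w; simp [w.2]⟩

theorem convex_memStabOn [DecidableEq W] (U : Finset W) :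
    Convex ℝ {x : W → ℝ | MemStabOn H U x} :=
  (convex_convexHull ℝ _).linear_preimage
    (LinearMap.funLeft ℝ ℝ (Subtype.val : {w // w ∈ U} → W))

theorem mem_stab_of_weights [DecidableEq W] {ι : Type*} [Fintype ι] {w : ι → ℝ}
    {U : ι → Finset W} (hw0 : ∀ i, 0 ≤ w i) (hw1 : ∑ i, w i = 1)
    (hU : ∀ i, w i ≠ 0 → IsStable H (U i)) :
    (fun v => ∑ i with v ∈ U i, w i) ∈ stab H := by
  have hmem : ∑ i, w i • (fun v => if v ∈ U i then (1 : ℝ) else 0) ∈ stab H :=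
    sum_smul_mem_convexHull hw0 hw1 fun i hi => ⟨U i, hU i hi, by convert rfl⟩
  convert hmem using 1
  ext v
  simp [sum_filter]

end StableSets

section CliqueLabel

variable {W : Type*}

/-- The vertex of the clique `C` lying in the stable set `S`, if there is one. -/
noncomputable def cliqueLabel (C S : Finset W) : Option W :=
  if h : ∃ w ∈ C, w ∈ S then some h.choose else none

/-- The law of `cliqueLabel C` under a probability distribution on stable sets that covers each
vertex `w` with mass `x w`. -/
noncomputable def cliqueMass (C : Finset W) (x : W → ℝ) : Option W → ℝ
  | none => 1 - ∑ w ∈ C, x w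
  | some w => if w ∈ C then x w else 0

theorem cliqueLabel_eq_none_iff {C S : Finset W} :
    cliqueLabel C S = none ↔ ∀ w ∈ C, w ∉ S := by
  unfold cliqueLabel
  split_ifs with h <;> simpa using h

theorem mem_of_cliqueLabel_eq_some {C S : Finset W} {w : W} (h : cliqueLabel C S = some w) :
    w ∈ C ∧ w ∈ S := by
  unfold cliqueLabel at h
  split_ifs at h with hex
  exact Option.some_injective _ h ▸ hex.choose_spec

theorem cliqueLabel_eq_some_iff {H : SimpleGraph W} {C S : Finset W}
    (hC : H.IsClique (C : Set W)) (hS : IsStable H S) {w : W} :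
    cliqueLabel C S = some w ↔ w ∈ C ∧ w ∈ S := by
  refine ⟨mem_of_cliqueLabel_eq_some, fun ⟨hwC, hwS⟩ => ?_⟩
  have hex : ∃ w ∈ C, w ∈ S := ⟨w, hwC, hwS⟩
  rw [cliqueLabel, dif_pos hex]
  obtain ⟨huC, huS⟩ := hex.choose_spec
  by_contra hne
  exact hS _ huS _ hwS (hC huC hwC fun h => hne (congrArg some h))

theorem sum_cliqueLabel_eq_cliqueMass [Fintype W] [DecidableEq W] {H : SimpleGraph W}
    {C : Finset W} (hC : H.IsClique (C : Set W)) {p : Finset W → ℝ}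
    (hp : ∀ S, p S ≠ 0 → IsStable H S) (hp1 : ∑ S, p S = 1) {x : W → ℝ}
    (hx : ∀ w ∈ C, x w = ∑ S with w ∈ S, p S)
    (ℓ : Option W) : ∑ S with cliqueLabel C S = ℓ, p S = cliqueMass C x ℓ := by
  have hsome : ∀ w, ∑ S with cliqueLabel C S = some w, p S = cliqueMass C x (some w) := by
    intro w
    by_cases hw : w ∈ C
    · rw [cliqueMass, if_pos hw, hx w hw, sum_filter, sum_filter]
      refine sum_congr rfl fun S _ => ?_
      by_cases hS : p S = 0
      · simp [hS]
      · simp [cliqueLabel_eq_some_iff hC (hp S hS), hw]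
    · rw [cliqueMass, if_neg hw]
      exact sum_eq_zero fun S hS => absurd (mem_of_cliqueLabel_eq_some (mem_filter.1 hS).2).1 hw
  cases ℓ with
  | some w => exact hsome w
  | none =>
    rw [← Finset.sum_fiberwise univ (cliqueLabel C) p, Fintype.sum_option] at hp1
    simp only [hsome, cliqueMass, Fintype.sum_ite_mem] at hp1 ⊢
    linarith

end CliqueLabel

section Amalgam

variable {G : SimpleGraph V} {V₁ A₁ K A₂ V₂ : Finset V}

section
omit [Fintype V]

theorem blockGraph_adj_inl_inl {a b : V} :
    (blockGraph G A₁ K A₂).Adj (.inl a) (.inl b) ↔ G.Adj a b := by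
  simpa [blockGraph, G.adj_comm b a] using G.ne_of_adj

theorem blockGraph_adj_inl_inr {a : V} {r : Bool} :
    (blockGraph G A₁ K A₂).Adj (.inl a) (.inr r) ↔
      (r = false ∧ a ∈ A₁ ∪ K) ∨ (r = true ∧ a ∈ A₂ ∪ K) := by
  simp [blockGraph]

theorem not_blockGraph_adj_inr_inr {r r' : Bool} :
    ¬ (blockGraph G A₁ K A₂).Adj (.inr r) (.inr r') := by
  simp [blockGraph]

theorem isClique_blockGraph (hK : ∀ a ∈ K, ∀ b ∈ K, a ≠ b → G.Adj a b) (r : Bool) :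
    (blockGraph G A₁ K A₂).IsClique (K.disjSum {r} : Set (V ⊕ Bool)) := by
  have hinr : ∀ k ∈ K, (blockGraph G A₁ K A₂).Adj (.inl k) (.inr r) := fun k hk =>
    blockGraph_adj_inl_inr.2 (by cases r <;> simp [hk])
  rintro (a | r₁) ha (b | r₂) hb hab <;>
    simp only [mem_coe, inl_mem_disjSum, inr_mem_disjSum, mem_singleton] at ha hb
  · exact blockGraph_adj_inl_inl.2 (hK a ha b hb fun h => hab (congrArg _ h))
  · exact hb ▸ hinr a ha
  · exact ha ▸ (hinr b hb).symm
  · exact absurd (congrArg _ (ha.trans hb.symm)) hab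

theorem disjSum_singleton_subset (X K : Finset V) (r : Bool) :
    K.disjSum {r} ⊆ (X ∪ K).image Sum.inl ∪ {Sum.inr r} := by
  rintro (k | r') h <;> simp_all

def LabelsCompatible (ℓ ℓ' : Option (V ⊕ Bool)) : Prop :=
  (ℓ = none → ℓ' = some (.inr true)) ∧ ∀ k, ℓ = some (.inl k) → ℓ' = some (.inl k)

theorem firstBlock_cases (hK : ∀ a ∈ K, ∀ b ∈ K, a ≠ b → G.Adj a b)
    (hKfull : ∀ k ∈ K, ∀ a ∈ A₁ ∪ A₂, G.Adj k a) {S : Finset (V ⊕ Bool)}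
    (hSU : S ⊆ (V₁ ∪ A₁ ∪ K).image Sum.inl ∪ {Sum.inr false})
    (hS : IsStable (blockGraph G A₁ K A₂) S) {a : V} (ha : .inl a ∈ S) :
    a ∈ V₁ ∨ (a ∈ A₁ ∧ cliqueLabel (K.disjSum {false}) S = none) ∨
      cliqueLabel (K.disjSum {false}) S = some (.inl a) := by
  have haU : a ∈ V₁ ∪ A₁ ∪ K := by simpa using hSU ha
  rcases mem_union.1 haU with haV | haK
  · rcases mem_union.1 haV with haV₁ | haA₁
    · exact Or.inl haV₁
    refine Or.inr (Or.inl ⟨haA₁, cliqueLabel_eq_none_iff.2 fun w hw hwS => hS _ hwS _ ha ?_⟩)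
    rcases w with k | r
    · exact blockGraph_adj_inl_inl.2 (hKfull k (by simpa using hw) a (mem_union_left _ haA₁))
    · obtain rfl : r = false := by simpa using hw
      exact (blockGraph_adj_inl_inr.2 (Or.inl ⟨rfl, mem_union_left _ haA₁⟩)).symm
  · exact Or.inr (Or.inr ((cliqueLabel_eq_some_iff (isClique_blockGraph hK false) hS).2
      ⟨by simpa using haK, ha⟩))

theorem secondBlock_cases {T : Finset (V ⊕ Bool)}
    (hTU : T ⊆ (V₂ ∪ A₂ ∪ K).image Sum.inl ∪ {Sum.inr true})
    (hT : IsStable (blockGraph G A₁ K A₂) T) {b : V} (hb : .inl b ∈ T) (hbK : b ∉ K) :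
    b ∈ V₂ ∪ A₂ ∧ (cliqueLabel (K.disjSum {true}) T = some (.inr true) → b ∈ V₂) := by
  have hbU : b ∈ V₂ ∪ A₂ ∪ K := by simpa using hTU hb
  have hb₂ : b ∈ V₂ ∪ A₂ := (mem_union.1 hbU).resolve_right hbK
  refine ⟨hb₂, fun hr => (mem_union.1 hb₂).resolve_right fun hbA => hT _ hb _
    (mem_of_cliqueLabel_eq_some hr).2 (blockGraph_adj_inl_inr.2 (Or.inr ⟨rfl, ?_⟩))⟩
  exact mem_union_left _ hbA

theorem not_adj_of_labelsCompatible (hK : ∀ a ∈ K, ∀ b ∈ K, a ≠ b → G.Adj a b)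
    (hKfull : ∀ k ∈ K, ∀ a ∈ A₁ ∪ A₂, G.Adj k a)
    (hV₁ : ∀ a ∈ V₁, ∀ b ∈ V₂ ∪ A₂, ¬ G.Adj a b) (hV₂ : ∀ a ∈ V₂, ∀ b ∈ V₁ ∪ A₁, ¬ G.Adj a b)
    {S T : Finset (V ⊕ Bool)} (hSU : S ⊆ (V₁ ∪ A₁ ∪ K).image Sum.inl ∪ {Sum.inr false})
    (hS : IsStable (blockGraph G A₁ K A₂) S)
    (hTU : T ⊆ (V₂ ∪ A₂ ∪ K).image Sum.inl ∪ {Sum.inr true})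
    (hT : IsStable (blockGraph G A₁ K A₂) T)
    (hST : LabelsCompatible (cliqueLabel (K.disjSum {false}) S)
      (cliqueLabel (K.disjSum {true}) T))
    {a b : V} (ha : .inl a ∈ S) (hb : .inl b ∈ T) (hbK : b ∉ K) : ¬ G.Adj a b := by
  obtain ⟨hb₂, hbV₂⟩ := secondBlock_cases hTU hT hb hbK
  rcases firstBlock_cases hK hKfull hSU hS ha with haV₁ | ⟨haA₁, hl⟩ | hl
  · exact hV₁ a haV₁ b hb₂
  · exact fun h => hV₂ b (hbV₂ (hST.1 hl)) a (mem_union_right _ haA₁) h.symm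
  · exact fun h => hT _ (mem_of_cliqueLabel_eq_some (hST.2 a hl)).2 _ hb
      (blockGraph_adj_inl_inl.2 h)

/-- A coupling of `cliqueMass (K.disjSum {false}) x` and `cliqueMass (K.disjSum {true}) x`; the
mass it puts on `(r₁, r₂)` is the slack in `x(K) + x_{r₁} + x_{r₂} ≥ 1`. -/
noncomputable def labelCoupling (K : Finset V) (x : V ⊕ Bool → ℝ) :
    Option (V ⊕ Bool) → Option (V ⊕ Bool) → ℝ
  | some (.inl k), some (.inl k') => if k = k' ∧ k ∈ K then x (.inl k) else 0
  | none, some (.inr true) => 1 - ∑ k ∈ K, x (.inl k) - x (.inr false)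
  | some (.inr false), none => 1 - ∑ k ∈ K, x (.inl k) - x (.inr true)
  | some (.inr false), some (.inr true) =>
      ∑ k ∈ K, x (.inl k) + x (.inr false) + x (.inr true) - 1
  | _, _ => 0

theorem labelCoupling_nonneg {K : Finset V} {x : V ⊕ Bool → ℝ}
    (h₁ : ∀ ℓ, 0 ≤ cliqueMass (K.disjSum {false}) x ℓ)
    (h₂ : ∀ ℓ, 0 ≤ cliqueMass (K.disjSum {true}) x ℓ)
    (hx : ∑ k ∈ K, x (.inl k) + x (.inr false) + x (.inr true) ≥ 1) (ℓ ℓ' : Option (V ⊕ Bool)) :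
    0 ≤ labelCoupling K x ℓ ℓ' := by
  have hn₁ := h₁ none
  have hn₂ := h₂ none
  simp only [cliqueMass, sum_disjSum, sum_singleton] at hn₁ hn₂
  rcases ℓ with _ | k | _ | _ <;> rcases ℓ' with _ | k' | _ | _ <;>
    simp only [labelCoupling] <;> try linarith
  split_ifs with h
  · simpa [cliqueMass, h.2] using h₁ (some (.inl k))
  · exact le_rfl

theorem labelsCompatible_of_labelCoupling_ne_zero {K : Finset V} {x : V ⊕ Bool → ℝ}
    {ℓ ℓ' : Option (V ⊕ Bool)} (h : labelCoupling K x ℓ ℓ' ≠ 0) : LabelsCompatible ℓ ℓ' := by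
  rcases ℓ with _ | k | _ | _ <;> rcases ℓ' with _ | k' | _ | _ <;>
    simp_all [labelCoupling, LabelsCompatible]

end

theorem sum_labelCoupling_right (K : Finset V) (x : V ⊕ Bool → ℝ) (ℓ : Option (V ⊕ Bool)) :
    ∑ ℓ', labelCoupling K x ℓ ℓ' = cliqueMass (K.disjSum {false}) x ℓ := by
  rcases ℓ with _ | k | _ | _ <;>
    simp [labelCoupling, cliqueMass, Fintype.sum_option, Fintype.sum_sum_type, sum_disjSum,
      ite_and] <;> ring

theorem sum_labelCoupling_left (K : Finset V) (x : V ⊕ Bool → ℝ) (ℓ : Option (V ⊕ Bool)) :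
    ∑ ℓ', labelCoupling K x ℓ' ℓ = cliqueMass (K.disjSum {true}) x ℓ := by
  rcases ℓ with _ | k | _ | _ <;>
    simp [labelCoupling, cliqueMass, Fintype.sum_option, Fintype.sum_sum_type, sum_disjSum,
      ite_and] <;> ring

def glue (X : Finset V) (S T : Finset (V ⊕ Bool)) : Finset V :=
  {v | if v ∈ X then .inl v ∈ S else .inl v ∈ T}

theorem isStable_glue (hK : ∀ a ∈ K, ∀ b ∈ K, a ≠ b → G.Adj a b)
    (hKfull : ∀ k ∈ K, ∀ a ∈ A₁ ∪ A₂, G.Adj k a)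
    (hV₁ : ∀ a ∈ V₁, ∀ b ∈ V₂ ∪ A₂, ¬ G.Adj a b) (hV₂ : ∀ a ∈ V₂, ∀ b ∈ V₁ ∪ A₁, ¬ G.Adj a b)
    {S T : Finset (V ⊕ Bool)} (hSU : S ⊆ (V₁ ∪ A₁ ∪ K).image Sum.inl ∪ {Sum.inr false})
    (hS : IsStable (blockGraph G A₁ K A₂) S)
    (hTU : T ⊆ (V₂ ∪ A₂ ∪ K).image Sum.inl ∪ {Sum.inr true})
    (hT : IsStable (blockGraph G A₁ K A₂) T)
    (hST : LabelsCompatible (cliqueLabel (K.disjSum {false}) S)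
      (cliqueLabel (K.disjSum {true}) T)) :
    IsStable G (glue (V₁ ∪ A₁ ∪ K) S T) := by
  have cross : ∀ a b, .inl a ∈ S → b ∉ V₁ ∪ A₁ ∪ K → .inl b ∈ T → ¬ G.Adj a b :=
    fun a b ha hbX hb => not_adj_of_labelsCompatible hK hKfull hV₁ hV₂ hSU hS hTU hT hST ha hb
      fun hbK => hbX (mem_union_right _ hbK)
  intro a ha b hb hab
  simp only [glue, mem_filter, mem_univ, true_and] at ha hb
  split_ifs at ha hb with haX hbX hbX
  · exact hS _ ha _ hb (blockGraph_adj_inl_inl.2 hab)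
  · exact cross a b ha hbX hb hab
  · exact cross b a hb haX ha hab.symm
  · exact hT _ ha _ hb (blockGraph_adj_inl_inl.2 hab)

theorem sum_mem_glue (hpart : V₁ ∪ A₁ ∪ K ∪ A₂ ∪ V₂ = Finset.univ)
    {p q : Finset (V ⊕ Bool) → ℝ} {σ : Finset (V ⊕ Bool) → Finset (V ⊕ Bool) → ℝ}
    (hσp : ∀ S, ∑ T, σ S T = p S) (hσq : ∀ T, ∑ S, σ S T = q T) {x : V ⊕ Bool → ℝ}
    (hxp : ∀ w ∈ (V₁ ∪ A₁ ∪ K).image Sum.inl ∪ {Sum.inr false}, x w = ∑ S with w ∈ S, p S)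
    (hxq : ∀ w ∈ (V₂ ∪ A₂ ∪ K).image Sum.inl ∪ {Sum.inr true}, x w = ∑ T with w ∈ T, q T)
    (v : V) :
    ∑ st : Finset (V ⊕ Bool) × Finset (V ⊕ Bool) with v ∈ glue (V₁ ∪ A₁ ∪ K) st.1 st.2,
      σ st.1 st.2 = x (.inl v) := by
  simp only [glue, mem_filter, mem_univ, true_and, sum_filter, Fintype.sum_prod_type]
  by_cases hv : v ∈ V₁ ∪ A₁ ∪ K
  · simp only [if_pos hv, sum_ite_irrel, hσp, sum_const_zero, ← sum_filter]
    exact (hxp _ (mem_union_left _ (mem_image_of_mem _ hv))).symm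
  · have hv₂ : v ∈ V₂ ∪ A₂ ∪ K := by
      have := hpart ▸ mem_univ v
      simp only [mem_union] at this hv ⊢
      tauto
    rw [sum_comm]
    simp only [if_neg hv, sum_ite_irrel, hσq, sum_const_zero, ← sum_filter]
    exact (hxq _ (mem_union_left _ (mem_image_of_mem _ hv₂))).symm

noncomputable def amalgamLifts (G : SimpleGraph V) (V₁ A₁ K A₂ V₂ : Finset V) : Set (V → ℝ) :=
  {z | ∃ x : (V ⊕ Bool) → ℝ,
    (∀ v : V, z v = x (Sum.inl v)) ∧
    MemStabOn (blockGraph G A₁ K A₂) ((V₁ ∪ A₁ ∪ K).image Sum.inl ∪ {Sum.inr false}) x ∧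
    MemStabOn (blockGraph G A₁ K A₂) ((V₂ ∪ A₂ ∪ K).image Sum.inl ∪ {Sum.inr true}) x ∧
    (∑ v ∈ K, x (Sum.inl v)) + x (Sum.inr false) + x (Sum.inr true) ≥ 1}

theorem convex_amalgamLifts : Convex ℝ (amalgamLifts G V₁ A₁ K A₂ V₂) := by
  rintro _ ⟨x, hzx, h₁, h₂, hx⟩ _ ⟨y, hzy, h₁', h₂', hy⟩ a b ha hb hab
  refine ⟨a • x + b • y, fun v => by simp [hzx, hzy], convex_memStabOn _ h₁ h₁' ha hb hab,
    convex_memStabOn _ h₂ h₂' ha hb hab, ?_⟩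
  simp only [Pi.add_apply, Pi.smul_apply, smul_eq_mul, sum_add_distrib, ← mul_sum]
  nlinarith

theorem indicator_mem_amalgamLifts (hA₁A₂ : ∀ a ∈ A₁, ∀ b ∈ A₂, G.Adj a b) {S : Finset V}
    (hS : IsStable G S) :
    (fun v => if v ∈ S then (1 : ℝ) else 0) ∈ amalgamLifts G V₁ A₁ K A₂ V₂ := by
  set R : Finset Bool := {r | ∀ a ∈ S, ¬ (blockGraph G A₁ K A₂).Adj (.inl a) (.inr r)}
  have hS' : IsStable (blockGraph G A₁ K A₂) (S.disjSum R) := by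
    rintro (a | r) ha (b | r') hb hab <;> simp only [inl_mem_disjSum, inr_mem_disjSum] at ha hb
    · exact hS a ha b hb (blockGraph_adj_inl_inl.1 hab)
    · exact (mem_filter.1 hb).2 a ha hab
    · exact (mem_filter.1 ha).2 b hb hab.symm
    · exact not_blockGraph_adj_inr_inr hab
  refine ⟨fun w => if w ∈ S.disjSum R then 1 else 0, fun v => by simp,
    memStabOn_indicator _ hS', memStabOn_indicator _ hS', ?_⟩
  simp only [inl_mem_disjSum, inr_mem_disjSum]
  have hK0 : 0 ≤ ∑ v ∈ K, if v ∈ S then (1 : ℝ) else 0 := sum_nonneg fun _ _ => by positivity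
  have hR0 : ∀ r, 0 ≤ if r ∈ R then (1 : ℝ) else 0 := fun _ => by positivity
  by_cases hSK : ∃ k ∈ K, k ∈ S
  · obtain ⟨k, hk, hkS⟩ := hSK
    have : 1 ≤ ∑ v ∈ K, if v ∈ S then (1 : ℝ) else 0 :=
      (single_le_sum (fun _ _ => by positivity) hk).trans' (by simp [hkS])
    linarith [hR0 false, hR0 true]
  have hfree : ∀ r, (∀ a ∈ S, a ∉ (if r then A₂ else A₁)) → r ∈ R := by
    intro r hr
    refine mem_filter.2 ⟨mem_univ r, fun a ha hadj => ?_⟩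
    rcases blockGraph_adj_inl_inr.1 hadj with ⟨rfl, h⟩ | ⟨rfl, h⟩ <;>
      exact (mem_union.1 h).elim (hr a ha) fun haK => hSK ⟨a, haK, ha⟩
  by_cases hSA₁ : ∃ a ∈ S, a ∈ A₁
  · obtain ⟨a, haS, haA⟩ := hSA₁
    have := hfree true fun b hbS hbA => hS a haS b hbS (hA₁A₂ a haA b hbA)
    linarith [hR0 false, show (if true ∈ R then (1 : ℝ) else 0) = 1 from if_pos this]
  · push Not at hSA₁
    have := hfree false hSA₁
    linarith [hR0 true, show (if false ∈ R then (1 : ℝ) else 0) = 1 from if_pos this]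

theorem amalgamLifts_subset_stab (hpart : V₁ ∪ A₁ ∪ K ∪ A₂ ∪ V₂ = Finset.univ)
    (hK : ∀ a ∈ K, ∀ b ∈ K, a ≠ b → G.Adj a b) (hKfull : ∀ k ∈ K, ∀ a ∈ A₁ ∪ A₂, G.Adj k a)
    (hV₁ : ∀ a ∈ V₁, ∀ b ∈ V₂ ∪ A₂, ¬ G.Adj a b) (hV₂ : ∀ a ∈ V₂, ∀ b ∈ V₁ ∪ A₁, ¬ G.Adj a b) :
    amalgamLifts G V₁ A₁ K A₂ V₂ ⊆ stab G := by
  rintro z ⟨x, hzx, h₁, h₂, hx⟩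
  obtain ⟨p, hp0, hp1, hpS, hxp⟩ := exists_weights_of_memStabOn h₁
  obtain ⟨q, hq0, hq1, hqT, hxq⟩ := exists_weights_of_memStabOn h₂
  have hν₁ := sum_cliqueLabel_eq_cliqueMass (isClique_blockGraph hK false)
    (fun S hS => (hpS S hS).2) hp1 (x := x) fun w hw => hxp w (disjSum_singleton_subset _ _ _ hw)
  have hν₂ := sum_cliqueLabel_eq_cliqueMass (isClique_blockGraph hK true)
    (fun T hT => (hqT T hT).2) hq1 (x := x) fun w hw => hxq w (disjSum_singleton_subset _ _ _ hw)
  obtain ⟨σ, hσ0, hσp, hσq, hσ⟩ := exists_coupling_of_coupling_map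
    (cliqueLabel (K.disjSum {false})) (cliqueLabel (K.disjSum {true})) hp0 hq0
    (labelCoupling_nonneg (fun ℓ => hν₁ ℓ ▸ sum_nonneg fun S _ => hp0 S)
      (fun ℓ => hν₂ ℓ ▸ sum_nonneg fun T _ => hq0 T) hx)
    (fun ℓ => (sum_labelCoupling_right K x ℓ).trans (hν₁ ℓ).symm)
    (fun ℓ => (sum_labelCoupling_left K x ℓ).trans (hν₂ ℓ).symm)
  have hz : z = fun v => ∑ st : Finset (V ⊕ Bool) × Finset (V ⊕ Bool)
      with v ∈ glue (V₁ ∪ A₁ ∪ K) st.1 st.2, σ st.1 st.2 :=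
    funext fun v => (hzx v).trans (sum_mem_glue hpart hσp hσq hxp hxq v).symm
  rw [hz]
  refine mem_stab_of_weights (fun st => hσ0 _ _) ?_ fun st hst => ?_
  · rw [Fintype.sum_prod_type]
    simp_rw [hσp]
    exact hp1
  · obtain ⟨hp, hq, hπ⟩ := hσ _ _ hst
    exact isStable_glue hK hKfull hV₁ hV₂ (hpS _ hp).1 (hpS _ hp).2 (hqT _ hq).1 (hqT _ hq).2
      (labelsCompatible_of_labelCoupling_ne_zero hπ)

end Amalgam

theorem stmt18_general (G : SimpleGraph V) (V₁ A₁ K A₂ V₂ : Finset V)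
    (hpart : V₁ ∪ A₁ ∪ K ∪ A₂ ∪ V₂ = Finset.univ)
    (hA₁A₂ : ∀ a ∈ A₁, ∀ b ∈ A₂, G.Adj a b)
    (hK : ∀ a ∈ K, ∀ b ∈ K, a ≠ b → G.Adj a b)
    (hKfull : ∀ k ∈ K, ∀ a ∈ A₁ ∪ A₂, G.Adj k a)
    (hV₁ : ∀ a ∈ V₁, ∀ b ∈ V₂ ∪ A₂, ¬ G.Adj a b)
    (hV₂ : ∀ a ∈ V₂, ∀ b ∈ V₁ ∪ A₁, ¬ G.Adj a b) :
    stab G = {z : V → ℝ | ∃ x : (V ⊕ Bool) → ℝ,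
      (∀ v : V, z v = x (Sum.inl v)) ∧
      MemStabOn (blockGraph G A₁ K A₂)
        ((V₁ ∪ A₁ ∪ K).image Sum.inl ∪ {Sum.inr false}) x ∧
      MemStabOn (blockGraph G A₁ K A₂)
        ((V₂ ∪ A₂ ∪ K).image Sum.inl ∪ {Sum.inr true}) x ∧
      (∑ v ∈ K, x (Sum.inl v)) + x (Sum.inr false) + x (Sum.inr true) ≥ 1} := by
  refine (convexHull_min ?_ convex_amalgamLifts).antisymm
    (amalgamLifts_subset_stab hpart hK hKfull hV₁ hV₂)
  rintro _ ⟨S, hS, rfl⟩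
  convert indicator_mem_amalgamLifts hA₁A₂ hS

/-- with blocks `G₁`, `G₂` of the amalgam decomposition of `G` along
`(V₁, A₁, K, A₂, V₂)`, `STAB(G)` consists of the restrictions to `V` of the vectors
`x` with `x_{G₁} ∈ STAB(G₁)`, `x_{G₂} ∈ STAB(G₂)` and `x(K) + x_{r₁} + x_{r₂} ≥ 1`. -/
theorem stmt18 (G : SimpleGraph V) (V₁ A₁ K A₂ V₂ : Finset V)
    (hpart : V₁ ∪ A₁ ∪ K ∪ A₂ ∪ V₂ = Finset.univ)
    (hdisj : ∀ X ∈ ([V₁, A₁, K, A₂, V₂] : List (Finset V)),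
      ∀ Y ∈ ([V₁, A₁, K, A₂, V₂] : List (Finset V)), X ≠ Y → Disjoint X Y)
    (hA₁ne : A₁.Nonempty) (hA₂ne : A₂.Nonempty)
    (hA₁A₂ : ∀ a ∈ A₁, ∀ b ∈ A₂, G.Adj a b)
    (hK : ∀ a ∈ K, ∀ b ∈ K, a ≠ b → G.Adj a b)
    (hKfull : ∀ k ∈ K, ∀ a ∈ A₁ ∪ A₂, G.Adj k a)
    (hV₁ : ∀ a ∈ V₁, ∀ b ∈ V₂ ∪ A₂, ¬ G.Adj a b)
    (hV₂ : ∀ a ∈ V₂, ∀ b ∈ V₁ ∪ A₁, ¬ G.Adj a b)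
    (hc₁ : 2 ≤ (V₁ ∪ A₁).card) (hc₂ : 2 ≤ (V₂ ∪ A₂).card) :
    stab G = {z : V → ℝ | ∃ x : (V ⊕ Bool) → ℝ,
      (∀ v : V, z v = x (Sum.inl v)) ∧
      MemStabOn (blockGraph G A₁ K A₂)
        ((V₁ ∪ A₁ ∪ K).image Sum.inl ∪ {Sum.inr false}) x ∧
      MemStabOn (blockGraph G A₁ K A₂)
        ((V₂ ∪ A₂ ∪ K).image Sum.inl ∪ {Sum.inr true}) x ∧
      (∑ v ∈ K, x (Sum.inl v)) + x (Sum.inr false) + x (Sum.inr true) ≥ 1} :=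
  stmt18_general G V₁ A₁ K A₂ V₂ hpart hA₁A₂ hK hKfull hV₁ hV₂
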